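/- arXiv:0812.1612 — 2 statements merged into one kernel-verified Lean document; each statement's English description precedes it below -/
import Mathlib

section
/- Let k be an algebraically closed field of characteristic zero and let R be a commutative affine (finitely generated) k-algebra equipped with a Poisson bracket. Let P be a Poisson-primitive ideal of R, and assume that the singleton {P} is a locally closed subset of P.spec R. Then P equals the intersection of all maximal ideals m of R whose Poisson core P(m) equals P. -/
/-!
If `{P}` is locally closed in `P.spec R`, some `f ∉ P` makes `P` the only Poisson prime that
contains `P` and avoids `f`. For a maximal ideal `m ⊇ P` with `f ∉ m`, the core `P(m)` is such a
Poisson prime, so `P(m) = P`. It is prime because in characteristic zero the radical of a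
Poisson ideal, and hence each minimal prime over it, is again Poisson. Finally `R` is a Jacobson
ring, so `P` is already the intersection of the maximal ideals that contain `P` and avoid `f`.
-/

/-- A Poisson bracket on a commutative `k`-algebra `R`: a `k`-bilinear,
antisymmetric map satisfying the Jacobi and Leibniz identities. -/
structure PoissonBracket (k : Type*) (R : Type*) [CommRing k] [CommRing R] [Algebra k R] where
  bracket : R → R → R
  add_left : ∀ a b c : R, bracket (a + b) c = bracket a c + bracket b c
  add_right : ∀ a b c : R, bracket a (b + c) = bracket a b + bracket a c
  smul_left : ∀ (t : k) (a b : R), bracket (t • a) b = t • bracket a b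
  smul_right : ∀ (t : k) (a b : R), bracket a (t • b) = t • bracket a b
  antisymm : ∀ a b : R, bracket a b = - bracket b a
  jacobi : ∀ a b c : R,
    bracket a (bracket b c) + bracket b (bracket c a) + bracket c (bracket a b) = 0
  leibniz : ∀ a b c : R, bracket a (b * c) = bracket a b * c + b * bracket a c

/-- An ideal `I` is a Poisson ideal if `{R, I} ⊆ I`. -/
def IsPoissonIdeal {k R : Type*} [CommRing k] [CommRing R] [Algebra k R]
    (B : PoissonBracket k R) (I : Ideal R) : Prop :=
  ∀ a : R, ∀ x ∈ I, B.bracket a x ∈ I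

/-- The Poisson core of an ideal `J`: the largest Poisson ideal contained in `J`,
i.e. the sum of all Poisson ideals contained in `J`. -/
def poissonCore {k R : Type*} [CommRing k] [CommRing R] [Algebra k R]
    (B : PoissonBracket k R) (J : Ideal R) : Ideal R :=
  sSup {I : Ideal R | IsPoissonIdeal B I ∧ I ≤ J}

/-- A Poisson-primitive ideal: the Poisson core of some maximal ideal. -/
def IsPoissonPrimitive {k R : Type*} [CommRing k] [CommRing R] [Algebra k R]
    (B : PoissonBracket k R) (P : Ideal R) : Prop :=
  ∃ m : Ideal R, m.IsMaximal ∧ poissonCore B m = P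

lemma Ideal.mem_of_natCast_mul_mem {k R : Type*} [Field k] [CharZero k] [CommRing R]
    [Algebra k R] (I : Ideal R) {n : ℕ} (hn : n ≠ 0) {x : R} (h : (n : R) * x ∈ I) : x ∈ I := by
  have hu : IsUnit (n : R) := by
    simpa using (isUnit_iff_ne_zero.mpr (Nat.cast_ne_zero.mpr hn : (n : k) ≠ 0)).map
      (algebraMap k R)
  exact (I.unit_mul_mem_iff_mem hu).mp h

lemma Ideal.exists_notMem_forall_mul_mem_radical {R : Type*} [CommRing R] [IsNoetherianRing R]
    {I Q : Ideal R} (hQ : Q ∈ I.minimalPrimes) : ∃ y ∉ Q, ∀ x ∈ Q, x * y ∈ I.radical := by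
  classical
  have hfin := I.finite_minimalPrimes_of_isNoetherianRing R
  set J := (hfin.toFinset.erase Q).inf id
  have hJ : ¬ J ≤ Q := by
    rw [hQ.1.1.inf_le']
    rintro ⟨Q', hQ', hle⟩
    rw [Finset.mem_erase, Set.Finite.mem_toFinset] at hQ'
    exact hQ'.1 (le_antisymm hle (hQ.2 hQ'.2.1 hle))
  obtain ⟨y, hyJ, hyQ⟩ := SetLike.not_le_iff_exists.mp hJ
  refine ⟨y, hyQ, fun x hx => ?_⟩
  rw [← I.sInf_minimalPrimes, ← hfin.coe_toFinset, ← hfin.toFinset.inf_id_eq_sInf,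
    ← Finset.insert_erase (hfin.mem_toFinset.mpr hQ), Finset.inf_insert]
  exact ⟨Q.mul_mem_right y hx, J.mul_mem_left x hyJ⟩

namespace Derivation

section CommRing

variable {k R : Type*} [CommRing k] [CommRing R] [Algebra k R] (D : Derivation k R R)

lemma apply_pow_succ (a : R) (n : ℕ) : D (a ^ (n + 1)) = (n + 1 : ℕ) * (a ^ n * D a) := by
  rw [leibniz_pow, add_tsub_cancel_right, nsmul_eq_mul, smul_eq_mul]

lemma mul_apply_pow (a : R) (n : ℕ) : a * D (a ^ n) = n * (a ^ n * D a) := by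
  cases n with
  | zero => simp
  | succ n => rw [apply_pow_succ]; ring

lemma apply_mem_sSup {S : Set (Ideal R)} (hS : ∀ I ∈ S, ∀ x ∈ I, D x ∈ I) :
    ∀ x ∈ sSup S, D x ∈ sSup S := by
  intro x hx
  rw [sSup_eq_iSup'] at hx ⊢
  refine Submodule.iSup_induction _ (motive := fun x => D x ∈ ⨆ I : S, (I : Ideal R)) hx
    (fun I x hx => Submodule.mem_iSup_of_mem I (hS I I.2 x hx)) (by simp) fun x y hx hy => ?_
  simpa using add_mem hx hy

/-- With `x * y ∈ √I` for `x ∈ Q` and `y ∉ Q`, Leibniz gives `y * D x ∈ Q`. -/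
lemma apply_mem_of_mem_minimalPrimes [IsNoetherianRing R] {I Q : Ideal R}
    (hrad : ∀ x ∈ I.radical, D x ∈ I.radical) (hQ : Q ∈ I.minimalPrimes) :
    ∀ x ∈ Q, D x ∈ Q := by
  obtain ⟨y, hyQ, hy⟩ := Ideal.exists_notMem_forall_mul_mem_radical hQ
  have hradQ : I.radical ≤ Q := hQ.1.1.radical_le_iff.mpr hQ.1.2
  intro x hx
  have hxy : x * D y + y * D x ∈ Q := by
    simpa [leibniz, smul_eq_mul, add_comm] using hradQ (hrad _ (hy x hx))
  have hyDx : y * D x ∈ Q := by simpa using Q.sub_mem hxy (Q.mul_mem_right (D y) hx)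
  exact (hQ.1.1.mem_or_mem hyDx).resolve_left hyQ

end CommRing

section CharZero

variable {k R : Type*} [Field k] [CharZero k] [CommRing R] [Algebra k R] (D : Derivation k R R)

/-- Multiply `D (x ^ (r + 1) * D x ^ (2 * j))` by `D x`: up to a multiple of the hypothesis
this is `(r + 1) * x ^ r * D x ^ (2 * j + 2)`, and `r + 1` is invertible. -/
lemma pow_mul_apply_pow_mem_of_succ {I : Ideal R} (hI : ∀ x ∈ I, D x ∈ I) {x : R} {r j : ℕ}
    (h : x ^ (r + 1) * D x ^ (2 * j) ∈ I) : x ^ r * D x ^ (2 * (j + 1)) ∈ I := by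
  have hD : D x * D (x ^ (r + 1) * D x ^ (2 * j)) ∈ I := I.mul_mem_left _ (hI _ h)
  have hcorr : (2 * j : ℕ) * D (D x) * (x ^ (r + 1) * D x ^ (2 * j)) ∈ I := I.mul_mem_left _ h
  have key : ((r + 1 : ℕ) : R) * (x ^ r * D x ^ (2 * (j + 1))) =
      D x * D (x ^ (r + 1) * D x ^ (2 * j)) -
        (2 * j : ℕ) * D (D x) * (x ^ (r + 1) * D x ^ (2 * j)) := by
    rw [leibniz, apply_pow_succ, smul_eq_mul, smul_eq_mul]
    linear_combination (-(x ^ (r + 1))) * D.mul_apply_pow (D x) (2 * j)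
  exact I.mem_of_natCast_mul_mem (k := k) r.succ_ne_zero (key ▸ I.sub_mem hD hcorr)

lemma apply_mem_radical {I : Ideal R} (hI : ∀ x ∈ I, D x ∈ I) :
    ∀ x ∈ I.radical, D x ∈ I.radical := by
  rintro x ⟨n, hn⟩
  have key : ∀ j r, r + j = n → x ^ r * D x ^ (2 * j) ∈ I := by
    intro j
    induction j with
    | zero => rintro r rfl; simpa using hn
    | succ j ih => exact fun r hr => D.pow_mul_apply_pow_mem_of_succ hI (ih (r + 1) (by omega))
  exact ⟨2 * n, by simpa using key n 0 (zero_add n)⟩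

end CharZero

end Derivation

section Poisson

variable {k R : Type*} [CommRing k] [CommRing R] [Algebra k R] (B : PoissonBracket k R)

def PoissonBracket.hamiltonian (a : R) : Derivation k R R :=
  Derivation.mk' ⟨⟨B.bracket a, B.add_right a⟩, fun t b => B.smul_right t a b⟩ fun b c => by
    simp only [LinearMap.coe_mk, AddHom.coe_mk, B.leibniz, smul_eq_mul]
    ring

lemma poissonCore_le (J : Ideal R) : poissonCore B J ≤ J :=
  sSup_le fun _ hI => hI.2

lemma le_poissonCore {I J : Ideal R} (hI : IsPoissonIdeal B I) (h : I ≤ J) :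
    I ≤ poissonCore B J :=
  le_sSup ⟨hI, h⟩

lemma isPoissonIdeal_poissonCore (J : Ideal R) : IsPoissonIdeal B (poissonCore B J) :=
  fun a => (B.hamiltonian a).apply_mem_sSup fun _ hI => hI.1 a

end Poisson

section PoissonCharZero

variable {k R : Type*} [Field k] [CharZero k] [CommRing R] [Algebra k R] {B : PoissonBracket k R}

lemma IsPoissonIdeal.radical {I : Ideal R} (hI : IsPoissonIdeal B I) :
    IsPoissonIdeal B I.radical :=
  fun a => (B.hamiltonian a).apply_mem_radical (hI a)

lemma IsPoissonIdeal.of_mem_minimalPrimes [IsNoetherianRing R] {I Q : Ideal R}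
    (hI : IsPoissonIdeal B I) (hQ : Q ∈ I.minimalPrimes) : IsPoissonIdeal B Q :=
  fun a => (B.hamiltonian a).apply_mem_of_mem_minimalPrimes (hI.radical a) hQ

/-- A minimal prime `Q` over the core with `Q ≤ m` is Poisson, so `Q` lies in the core too. -/
lemma isPrime_poissonCore [IsNoetherianRing R] {m : Ideal R} (hm : m.IsPrime) :
    (poissonCore B m).IsPrime := by
  obtain ⟨Q, hQ, hQm⟩ := Ideal.exists_minimalPrimes_le (poissonCore_le B m)
  have hQPoisson := (isPoissonIdeal_poissonCore B m).of_mem_minimalPrimes hQ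
  rw [le_antisymm hQ.1.2 (le_poissonCore B hQPoisson hQm)]
  exact hQ.1.1

end PoissonCharZero

lemma IsLocallyClosed.exists_isOpen_forall_specializes_eq {X : Type*} [TopologicalSpace X]
    {x : X} (h : IsLocallyClosed ({x} : Set X)) :
    ∃ U : Set X, IsOpen U ∧ x ∈ U ∧ ∀ y ∈ U, x ⤳ y → y = x := by
  refine ⟨coborder {x}, isLocallyClosed_iff_isOpen_coborder.mp h, subset_coborder rfl,
    fun y hyU hxy => ?_⟩
  have hy : y ∈ coborder {x} ∩ closure {x} := ⟨hyU, specializes_iff_mem_closure.mp hxy⟩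
  rwa [coborder_inter_closure] at hy

lemma PrimeSpectrum.exists_notMem_forall_eq_of_isLocallyClosed {R : Type*} [CommRing R]
    {S : PrimeSpectrum R → Prop} {p : Subtype S} (h : IsLocallyClosed ({p} : Set (Subtype S))) :
    ∃ f ∉ p.1.asIdeal, ∀ q : Subtype S, p.1 ≤ q.1 → f ∉ q.1.asIdeal → q = p := by
  obtain ⟨U, hU, hpU, hU_eq⟩ := h.exists_isOpen_forall_specializes_eq
  obtain ⟨V, hV, rfl⟩ := isOpen_induced_iff.mp hU
  obtain ⟨_, ⟨f, rfl⟩, hpf, hfV⟩ := isTopologicalBasis_basic_opens.isOpen_iff.mp hV p.1 hpU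
  refine ⟨f, hpf, fun q hpq hfq => hU_eq q (hfV hfq) ?_⟩
  exact (subtype_specializes_iff p q).mpr ((le_iff_specializes _ _).mp hpq)

lemma Ideal.IsPrime.eq_sInf_isMaximal_notMem {R : Type*} [CommRing R] [IsJacobsonRing R]
    {P : Ideal R} (hP : P.IsPrime) {f : R} (hf : f ∉ P) :
    P = sInf {m : Ideal R | m.IsMaximal ∧ P ≤ m ∧ f ∉ m} := by
  refine le_antisymm (le_sInf fun m hm => hm.2.1) fun x hx => ?_
  have hxf : x * f ∈ P.jacobson := by
    refine Ideal.mem_sInf.mpr fun {m} ⟨hPm, hm⟩ => ?_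
    by_cases hfm : f ∈ m
    · exact m.mul_mem_left x hfm
    · exact m.mul_mem_right f (Ideal.mem_sInf.mp hx ⟨hm, hPm, hfm⟩)
  rw [IsJacobsonRing.out inferInstance hP.isRadical] at hxf
  exact (hP.mem_or_mem hxf).resolve_right hf

theorem locallyClosed_poissonPrimitive_eq_sInf_general (k R : Type*) [Field k] [CharZero k]
    [CommRing R] [Algebra k R] [Algebra.FiniteType k R]
    (B : PoissonBracket k R)
    (p : {q : PrimeSpectrum R // IsPoissonIdeal B q.asIdeal})
    (hloc : IsLocallyClosed ({p} : Set {q : PrimeSpectrum R // IsPoissonIdeal B q.asIdeal})) :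
    p.1.asIdeal = sInf {m : Ideal R | m.IsMaximal ∧ poissonCore B m = p.1.asIdeal} := by
  have : IsNoetherianRing R := Algebra.FiniteType.isNoetherianRing k R
  have : IsJacobsonRing R := isJacobsonRing_of_finiteType (A := k)
  obtain ⟨f, hfp, hf⟩ := PrimeSpectrum.exists_notMem_forall_eq_of_isLocallyClosed hloc
  refine le_antisymm (le_sInf fun m ⟨_, hm⟩ => hm ▸ poissonCore_le B m) ?_
  conv_rhs => rw [p.1.2.eq_sInf_isMaximal_notMem hfp]
  refine sInf_le_sInf fun m ⟨hm, hpm, hfm⟩ => ⟨hm, ?_⟩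
  let q : {q : PrimeSpectrum R // IsPoissonIdeal B q.asIdeal} :=
    ⟨⟨poissonCore B m, isPrime_poissonCore hm.isPrime⟩, isPoissonIdeal_poissonCore B m⟩
  exact congrArg (·.1.asIdeal) <|
    hf q (le_poissonCore B p.2 hpm) fun hfq => hfm (poissonCore_le B m hfq)

/-- over an algebraically closed field of characteristic zero, if a
Poisson-primitive ideal `P` of an affine Poisson algebra is a locally closed point of the
Poisson prime spectrum, then `P` is the intersection of the maximal ideals whose Poisson
core is `P`. -/
theorem locallyClosed_poissonPrimitive_eq_sInf (k R : Type*) [Field k] [CharZero k]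
    [IsAlgClosed k] [CommRing R] [Algebra k R] [Algebra.FiniteType k R]
    (B : PoissonBracket k R)
    (p : {q : PrimeSpectrum R // IsPoissonIdeal B q.asIdeal})
    (hp : IsPoissonPrimitive B p.1.asIdeal)
    (hloc : IsLocallyClosed ({p} : Set {q : PrimeSpectrum R // IsPoissonIdeal B q.asIdeal})) :
    p.1.asIdeal = sInf {m : Ideal R | m.IsMaximal ∧ poissonCore B m = p.1.asIdeal} :=
  locallyClosed_poissonPrimitive_eq_sInf_general k R B p hloc
end

section
/- Let k be a field of characteristic zero, let A be a commutative noetherian ring, and let R be a commutative noetherian k-algebra equipped with a Poisson bracket. Then a bijection φ from Spec A onto P.spec R is a homeomorphism (with respect to the Zariski topology on Spec A and the subspace topology on P.spec R) if and only if both φ and its inverse preserve inclusions of ideals, i.e. P ⊆ Q if and only if φ(P) ⊆ φ(Q) for all primes P, Q of A. -/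
/-!
In a noetherian quasi-sober space every closed set is a finite union of closures of points, so
the topology is determined by the specialization order, which on prime spectra is inclusion.
`Spec A` is such a space, and so is `P.spec R`: it is noetherian as a subspace of `Spec R`, and
the generic point of an irreducible set of Poisson primes is their intersection, which is again
a Poisson prime.
-/

open Topology TopologicalSpace

section SoberNoetherian

variable {X Y : Type*} [TopologicalSpace X] [TopologicalSpace Y]

theorem NoetherianSpace.exists_finite_biUnion_closure_singleton [NoetherianSpace X]
    [QuasiSober X] {C : Set X} (hC : IsClosed C) :
    ∃ S : Set X, S.Finite ∧ C = ⋃ x ∈ S, closure {x} := by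
  obtain ⟨T, hTfin, hTclosed, hTirr, rfl⟩ :=
    NoetherianSpace.exists_finite_set_isClosed_irreducible hC
  choose g hg using fun t : T => QuasiSober.sober (hTirr t t.2) (hTclosed t t.2)
  have : Finite T := hTfin.to_subtype
  refine ⟨Set.range g, Set.finite_range g, ?_⟩
  rw [Set.biUnion_range, Set.sUnion_eq_iUnion]
  exact Set.iUnion_congr fun t => (hg t).symm

theorem continuous_of_surjective_of_specializes_iff [NoetherianSpace Y] [QuasiSober Y]
    {f : X → Y} (hf : Function.Surjective f) (h : ∀ x x', f x ⤳ f x' ↔ x ⤳ x') :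
    Continuous f := by
  refine continuous_iff_isClosed.mpr fun C hC => ?_
  obtain ⟨S, hS, rfl⟩ := NoetherianSpace.exists_finite_biUnion_closure_singleton hC
  rw [Set.preimage_iUnion₂]
  refine hS.isClosed_biUnion fun y _ => ?_
  obtain ⟨x, rfl⟩ := hf y
  have hpre : f ⁻¹' closure {f x} = closure {x} := by
    ext x'
    simp only [Set.mem_preimage, ← specializes_iff_mem_closure, h]
  exact hpre ▸ isClosed_closure

theorem isHomeomorph_iff_specializes_iff [NoetherianSpace X] [QuasiSober X]
    [NoetherianSpace Y] [QuasiSober Y] {f : X → Y} (hf : Function.Bijective f) :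
    IsHomeomorph f ↔ ∀ x x', f x ⤳ f x' ↔ x ⤳ x' := by
  refine ⟨fun hhom x x' => hhom.isInducing.specializes_iff, fun h => ?_⟩
  let e := Equiv.ofBijective f hf
  refine e.isHomeomorph_iff.mpr ⟨continuous_of_surjective_of_specializes_iff hf.surjective h,
    continuous_of_surjective_of_specializes_iff e.symm.surjective fun y y' => ?_⟩
  rw [← h, Equiv.ofBijective_apply_symm_apply f hf, Equiv.ofBijective_apply_symm_apply f hf]

theorem quasiSober_subtype_of_exists_isGenericPoint {S : Set X}
    (h : ∀ T ⊆ S, IsIrreducible T → ∃ x ∈ S, IsGenericPoint x (closure T)) :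
    QuasiSober S := by
  refine ⟨fun {T} hT hTclosed => ?_⟩
  obtain ⟨x, hxS, hx⟩ := h ((↑) '' T) Set.image_val_subset
    (hT.image _ continuous_subtype_val.continuousOn)
  refine ⟨⟨x, hxS⟩, ?_⟩
  have hval : IsInducing ((↑) : S → X) := .subtypeVal
  rw [IsGenericPoint, hval.closure_eq_preimage_closure_image, Set.image_singleton, hx.def,
    ← hval.closure_eq_preimage_closure_image, hTclosed.closure_eq]

end SoberNoetherian

section PoissonSpectrum

variable {k R : Type*} [CommRing k] [CommRing R] [Algebra k R] (B : PoissonBracket k R)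

theorem isPoissonIdeal_vanishingIdeal {T : Set (PrimeSpectrum R)}
    (hT : ∀ p ∈ T, IsPoissonIdeal B p.asIdeal) :
    IsPoissonIdeal B (PrimeSpectrum.vanishingIdeal T) := by
  intro a x hx
  rw [PrimeSpectrum.mem_vanishingIdeal] at hx ⊢
  exact fun p hp => hT p hp a x (hx p hp)

instance quasiSober_poissonSpectrum :
    QuasiSober {p : PrimeSpectrum R // IsPoissonIdeal B p.asIdeal} :=
  quasiSober_subtype_of_exists_isGenericPoint fun T hT hirr => by
    refine ⟨hirr.genericPoint, ?_, hirr.isGenericPoint_genericPoint_closure⟩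
    have hideal : hirr.genericPoint.asIdeal = PrimeSpectrum.vanishingIdeal T := by
      rw [← PrimeSpectrum.vanishingIdeal_singleton, ← PrimeSpectrum.vanishingIdeal_closure,
        hirr.genericPoint_closure_eq, PrimeSpectrum.vanishingIdeal_closure]
    exact (hideal ▸ isPoissonIdeal_vanishingIdeal B hT : _)

instance noetherianSpace_poissonSpectrum [IsNoetherianRing R] :
    NoetherianSpace {p : PrimeSpectrum R // IsPoissonIdeal B p.asIdeal} :=
  IsInducing.subtypeVal.noetherianSpace

end PoissonSpectrum

theorem homeomorph_iff_preserves_inclusions_general (k A R : Type*) [Field k]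
    [CommRing A] [IsNoetherianRing A] [CommRing R] [Algebra k R] [IsNoetherianRing R]
    (B : PoissonBracket k R)
    (f : PrimeSpectrum A → {p : PrimeSpectrum R // IsPoissonIdeal B p.asIdeal})
    (hf : Function.Bijective f) :
    IsHomeomorph f ↔
      ∀ P Q : PrimeSpectrum A, (P.asIdeal ≤ Q.asIdeal ↔ (f P).1.asIdeal ≤ (f Q).1.asIdeal) := by
  rw [isHomeomorph_iff_specializes_iff hf]
  refine forall₂_congr fun P Q => ?_
  rw [subtype_specializes_iff, ← PrimeSpectrum.le_iff_specializes,
    ← PrimeSpectrum.le_iff_specializes, PrimeSpectrum.asIdeal_le_asIdeal,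
    PrimeSpectrum.asIdeal_le_asIdeal]
  exact iff_comm

/-- a bijection from `Spec A` onto the Poisson prime spectrum of `R` is a
homeomorphism if and only if it and its inverse preserve inclusions. -/
theorem homeomorph_iff_preserves_inclusions (k A R : Type*) [Field k] [CharZero k]
    [CommRing A] [IsNoetherianRing A] [CommRing R] [Algebra k R] [IsNoetherianRing R]
    (B : PoissonBracket k R)
    (f : PrimeSpectrum A → {p : PrimeSpectrum R // IsPoissonIdeal B p.asIdeal})
    (hf : Function.Bijective f) :
    IsHomeomorph f ↔
      ∀ P Q : PrimeSpectrum A, (P.asIdeal ≤ Q.asIdeal ↔ (f P).1.asIdeal ≤ (f Q).1.asIdeal) :=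
  homeomorph_iff_preserves_inclusions_general k A R B f hf
end
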